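/- arXiv:1609.03012 — 3 statements merged into one kernel-verified Lean document; each statement's English description precedes it below -/
import Mathlib

section
/- Let S and T be disjoint finite sets of odd primes; for an odd prime p set p* = (−1)^{(p−1)/2}·p. Suppose d₁ = ∏_{p∈S} p* and d₂ = ∏_{q∈T} q* satisfy d₁ > 0 and d₂ > 0. Then Δ(d₁,d₂) = Δ(d₂,d₁), i.e., ∏_{p∈S} ∏_{q∈T} (q/p) = ∏_{p∈S} ∏_{q∈T} (p/q), where (·/·) denotes the Legendre symbol. -/
/-- For a finset of odd primes with positive product of `p*`, the sum `∑ (p-1)/2` is even. -/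
lemma even_sum_of_pos (S : Finset ℕ) (hS : ∀ p ∈ S, Nat.Prime p ∧ Odd p)
    (hpos : 0 < ∏ p ∈ S, ((-1 : ℤ) ^ ((p - 1) / 2) * (p : ℤ))) :
    Even (∑ p ∈ S, (p - 1) / 2) := by
  rw [Finset.prod_mul_distrib, Finset.prod_pow_eq_pow_sum] at hpos
  have hprodpos : 0 < ∏ p ∈ S, (p : ℤ) :=
    Finset.prod_pos fun p hp => by exact_mod_cast (hS p hp).1.pos
  have hsign : (0 : ℤ) < (-1) ^ (∑ p ∈ S, (p - 1) / 2) := by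
    by_contra h
    push_neg at h
    nlinarith
  rcases Nat.even_or_odd (∑ p ∈ S, (p - 1) / 2) with h | h
  · exact h
  · rw [Odd.neg_one_pow h] at hsign; norm_num at hsign

/-- Let `S` and `T` be disjoint finite sets of odd primes and, writing
`p* = (−1)^((p−1)/2) · p`, suppose `d₁ = ∏_{p∈S} p*` and `d₂ = ∏_{q∈T} q*` are positive.
Then `Δ(d₁,d₂) = Δ(d₂,d₁)`, i.e.
`∏_{p∈S} ∏_{q∈T} (q/p) = ∏_{p∈S} ∏_{q∈T} (p/q)` where `(·/·)` is the Legendre symbol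
(for odd primes it coincides with the Jacobi symbol used below). -/
theorem legendre_product_symmetric (S T : Finset ℕ)
    (hS : ∀ p ∈ S, Nat.Prime p ∧ Odd p) (hT : ∀ q ∈ T, Nat.Prime q ∧ Odd q)
    (hST : Disjoint S T)
    (hd1pos : 0 < ∏ p ∈ S, ((-1 : ℤ) ^ ((p - 1) / 2) * (p : ℤ)))
    (hd2pos : 0 < ∏ q ∈ T, ((-1 : ℤ) ^ ((q - 1) / 2) * (q : ℤ))) :
    ∏ p ∈ S, ∏ q ∈ T, jacobiSym (q : ℤ) p = ∏ p ∈ S, ∏ q ∈ T, jacobiSym (p : ℤ) q := by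
  have hE1 : Even (∑ p ∈ S, (p - 1) / 2) := even_sum_of_pos S hS hd1pos
  have hdiv : ∀ p : ℕ, Odd p → (p - 1) / 2 = p / 2 := by
    intro p hp
    rw [Nat.odd_iff] at hp
    omega
  have step : ∏ p ∈ S, ∏ q ∈ T, jacobiSym (q : ℤ) p
      = ∏ p ∈ S, ∏ q ∈ T, ((-1 : ℤ) ^ (q / 2 * (p / 2)) * jacobiSym (p : ℤ) q) := by
    refine Finset.prod_congr rfl fun p hp => Finset.prod_congr rfl fun q hq => ?_
    exact jacobiSym.quadratic_reciprocity (hT q hq).2 (hS p hp).2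
  rw [step]
  simp_rw [Finset.prod_mul_distrib]
  have hE1' : Even (∑ p ∈ S, p / 2) := by
    rwa [Finset.sum_congr rfl fun p hp => (hdiv p (hS p hp).2)] at hE1
  have hexp : ∑ p ∈ S, ∑ q ∈ T, q / 2 * (p / 2) = (∑ q ∈ T, q / 2) * ∑ p ∈ S, p / 2 := by
    simp_rw [← Finset.sum_mul]
    rw [← Finset.mul_sum]
  have hsign : (∏ p ∈ S, ∏ q ∈ T, (-1 : ℤ) ^ (q / 2 * (p / 2))) = 1 := by
    simp_rw [Finset.prod_pow_eq_pow_sum]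
    rw [hexp]
    exact Even.neg_one_pow (hE1'.mul_left _)
  rw [hsign, one_mul]
end

section
/- Let S and T be disjoint finite sets of odd primes, d₁ = ∏_{p∈S} p* and d₂ = ∏_{q∈T} q* with d₁ > 0 and d₂ > 0, where p* = (−1)^{(p−1)/2}·p. If Δ(d₁,d₂) = −1, then there is no number field L such that: L is Galois over ℚ with Galois group Gal(L/ℚ) isomorphic to the quaternion group Q₈ of order 8, the discriminant of L is odd, and L contains elements x, y with x² = d₁ and y² = d₂ (equivalently, ℚ(√d₁, √d₂) ⊆ L). -/
/-!
Suppose `L/ℚ` is a `Q₈`-extension containing `x = √d₁` and `y = √d₂`. Pick `i, j ∈ Gal(L/ℚ)` with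
`i x = x, i y = -y, j x = -x, j y = y`; then `z = i² = j²` is the central involution and
`ji = ijz`. For `w` with `z w = -w`, the elements `A = i w / w` and `B = j w / w` lie in the fixed
field `ℚ(x, y)` of `z` and satisfy `i(A) A = -1`, `j(B) B = -1`, `j(A) B = -i(B) A`. Comparing
coefficients in the basis `1, x, y, xy` gives a system of rational equations.

On the arithmetic side, multiplicativity of the Jacobi symbol turns `Δ(d₁,d₂) = -1` and `d₁ > 0`
into `∏_{p ∈ S} (-d₂/p) = -1`, so some `p ∈ S` has `(-d₂/p) = -1`. Then `p ∥ d₁`, and a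
`p`-primitive integral solution of the system cannot exist: working modulo `p` and `p²`, the
anisotropy of `X² + d₂Y²` modulo `p` forces every coordinate to be divisible by `p`.
-/

open Finset

def primeStar (p : ℕ) : ℤ := (-1) ^ ((p - 1) / 2) * p

lemma jacobiSym_neg_one_of_odd {p : ℕ} (hp : Odd p) :
    jacobiSym (-1) p = (-1) ^ ((p - 1) / 2) := by
  rw [jacobiSym.at_neg_one hp, ZMod.χ₄_eq_neg_one_pow (Nat.odd_iff.mp hp)]
  have := Nat.odd_iff.mp hp
  congr 1
  omega

lemma prod_jacobiSym_neg_one_eq_one {S : Finset ℕ} (hS : ∀ p ∈ S, Odd p)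
    (hpos : 0 < ∏ p ∈ S, primeStar p) : ∏ p ∈ S, jacobiSym (-1) p = 1 := by
  have hP : 0 < ∏ p ∈ S, (p : ℤ) := prod_pos fun p hp => by exact_mod_cast (hS p hp).pos
  rw [prod_congr rfl fun p hp => jacobiSym_neg_one_of_odd (hS p hp), prod_pow_eq_pow_sum]
  unfold primeStar at hpos
  rw [prod_mul_distrib, prod_pow_eq_pow_sum] at hpos
  rcases neg_one_pow_eq_or ℤ (∑ p ∈ S, (p - 1) / 2) with h | h
  · exact h
  · rw [h] at hpos
    linarith

lemma prod_jacobiSym_mul (S : Finset ℕ) (a b : ℤ) :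
    ∏ p ∈ S, jacobiSym (a * b) p = (∏ p ∈ S, jacobiSym a p) * ∏ p ∈ S, jacobiSym b p := by
  simp only [jacobiSym.mul_left, prod_mul_distrib]

lemma prod_jacobiSym_prod (S T : Finset ℕ) (f : ℕ → ℤ) :
    ∏ p ∈ S, jacobiSym (∏ q ∈ T, f q) p = ∏ q ∈ T, ∏ p ∈ S, jacobiSym (f q) p := by
  rw [prod_comm]
  refine prod_congr rfl fun p _ => ?_
  induction T using Finset.cons_induction with
  | empty => simp [jacobiSym.one_left]
  | cons q T hq ih => rw [prod_cons, prod_cons, jacobiSym.mul_left, ih]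

lemma prod_jacobiSym_neg_prod_primeStar {S T : Finset ℕ} (hS : ∀ p ∈ S, Odd p)
    (hpos : 0 < ∏ p ∈ S, primeStar p) :
    ∏ p ∈ S, jacobiSym (-∏ q ∈ T, primeStar q) p = ∏ p ∈ S, ∏ q ∈ T, jacobiSym q p := by
  have h := prod_jacobiSym_neg_one_eq_one hS hpos
  rw [neg_eq_neg_one_mul, prod_jacobiSym_mul, h, one_mul, prod_jacobiSym_prod]
  conv_rhs => rw [prod_comm]
  refine prod_congr rfl fun q _ => ?_
  simp only [primeStar, prod_jacobiSym_mul, jacobiSym.pow_left, prod_pow, h, one_pow, one_mul]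

lemma exists_mem_jacobiSym_eq_neg_one {S : Finset ℕ} {a : ℤ}
    (h : ∏ p ∈ S, jacobiSym a p = -1) : ∃ p ∈ S, jacobiSym a p = -1 := by
  by_contra! hne
  have hone : ∀ p ∈ S, jacobiSym a p = 1 := fun p hp =>
    ((jacobiSym.trichotomy a p).resolve_left fun h0 =>
      absurd h (by rw [prod_eq_zero hp h0]; norm_num)).resolve_right (hne p hp)
  rw [prod_eq_one hone] at h
  norm_num at h

lemma exists_mem_not_isSquare_neg_prod_primeStar {S : Finset ℕ} (T : Finset ℕ)
    (hS : ∀ p ∈ S, p.Prime ∧ Odd p) (hpos : 0 < ∏ p ∈ S, primeStar p)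
    (hΔ : ∏ p ∈ S, ∏ q ∈ T, jacobiSym q p = -1) :
    ∃ p ∈ S, ¬ IsSquare (-∏ q ∈ T, primeStar q : ZMod p) := by
  obtain ⟨p, hpS, hp⟩ := exists_mem_jacobiSym_eq_neg_one
    (by rwa [prod_jacobiSym_neg_prod_primeStar (fun p hp => (hS p hp).2) hpos])
  have : Fact p.Prime := ⟨(hS p hpS).1⟩
  refine ⟨p, hpS, ?_⟩
  exact_mod_cast (legendreSym.eq_neg_one_iff p).mp (by rwa [jacobiSym.legendreSym.to_jacobiSym])

lemma not_dvd_prod_primeStar {p : ℕ} (hp : p.Prime) {M : Finset ℕ} (hM : ∀ q ∈ M, q.Prime)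
    (hpM : p ∉ M) : ¬ (p : ℤ) ∣ ∏ q ∈ M, primeStar q := by
  intro hdvd
  obtain ⟨q, hqM, hq⟩ := (Nat.prime_iff_prime_int.mp hp).exists_mem_finset_dvd hdvd
  rw [primeStar, ((isUnit_one.neg).pow _).dvd_mul_left, Int.natCast_dvd_natCast,
    Nat.prime_dvd_prime_iff_eq hp (hM q hqM)] at hq
  exact hpM (hq ▸ hqM)

lemma exists_prod_primeStar_eq_mul {p : ℕ} {S : Finset ℕ} (hS : ∀ q ∈ S, q.Prime) (hp : p ∈ S) :
    ∃ e, ∏ q ∈ S, primeStar q = p * e ∧ ¬ (p : ℤ) ∣ e := by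
  refine ⟨(-1) ^ ((p - 1) / 2) * ∏ q ∈ S.erase p, primeStar q, ?_, ?_⟩
  · rw [← mul_prod_erase S _ hp, primeStar]
    ring
  · rw [((isUnit_one.neg).pow _).dvd_mul_left]
    exact not_dvd_prod_primeStar (hS p hp) (fun q hq => hS q (mem_of_mem_erase hq))
      (S.notMem_erase p)

lemma not_isSquare_mul_of_not_dvd {p : ℕ} (hp : p.Prime) {e : ℤ} (he : ¬ (p : ℤ) ∣ e) :
    ¬ IsSquare ((p * e : ℤ) : ℚ) := by
  intro hsq
  obtain ⟨r, hr⟩ := Rat.isSquare_intCast_iff.mp hsq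
  obtain ⟨m, rfl⟩ := (Nat.prime_iff_prime_int.mp hp).dvd_of_dvd_pow (n := 2) ⟨e, by rw [sq, ← hr]⟩
  exact he ⟨m * m, mul_left_cancel₀ (by exact_mod_cast hp.ne_zero : (p : ℤ) ≠ 0)
    (by linear_combination hr)⟩

lemma not_isSquare_prod_primeStar {T : Finset ℕ} (hT : ∀ q ∈ T, q.Prime) (hT₀ : T.Nonempty) :
    ¬ IsSquare ((∏ q ∈ T, primeStar q : ℤ) : ℚ) := by
  obtain ⟨q, hq⟩ := hT₀
  obtain ⟨f, hf, hqf⟩ := exists_prod_primeStar_eq_mul hT hq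
  rw [hf]
  exact not_isSquare_mul_of_not_dvd (hT q hq) hqf

/-- For `A = u₀ + u₁√a + u₂√b + u₃√a√b`, `B` built from `v` in the same way, and the automorphisms
`i : √b ↦ -√b`, `j : √a ↦ -√a` of `ℚ(√a, √b)`: the rational coefficients of `i(A) A = -1` and
`j(B) B = -1` and all four coefficients of `j(A) B = -i(B) A`, with denominators `s`, `t` cleared. -/
def QuaternionEmbeddingSystem {R : Type*} [CommRing R] (a b : R) (u v : Fin 4 → R) (s t : R) :
    Prop :=
  u 0 ^ 2 + a * u 1 ^ 2 - b * u 2 ^ 2 - a * b * u 3 ^ 2 = -s ^ 2 ∧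
  v 0 ^ 2 - a * v 1 ^ 2 + b * v 2 ^ 2 - a * b * v 3 ^ 2 = -t ^ 2 ∧
  u 0 * v 0 = a * b * u 3 * v 3 ∧ u 0 * v 1 = b * u 3 * v 2 ∧
  u 2 * v 0 = a * u 1 * v 3 ∧ u 2 * v 1 = u 1 * v 2

namespace QuaternionEmbeddingSystem

variable {R S : Type*} [CommRing R] [CommRing S] {a b s t : R} {u v : Fin 4 → R}

lemma smul (h : QuaternionEmbeddingSystem a b u v s t) (c d : R) :
    QuaternionEmbeddingSystem a b (c • u) (d • v) (c * s) (d * t) := by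
  obtain ⟨h₁, h₂, h₃, h₄, h₅, h₆⟩ := h
  simp only [QuaternionEmbeddingSystem, Pi.smul_apply, smul_eq_mul]
  refine ⟨?_, ?_, ?_, ?_, ?_, ?_⟩
  · linear_combination c ^ 2 * h₁
  · linear_combination d ^ 2 * h₂
  · linear_combination c * d * h₃
  · linear_combination c * d * h₄
  · linear_combination c * d * h₅
  · linear_combination c * d * h₆

lemma map (h : QuaternionEmbeddingSystem a b u v s t) (f : R →+* S) :
    QuaternionEmbeddingSystem (f a) (f b) (f ∘ u) (f ∘ v) (f s) (f t) := by
  obtain ⟨h₁, h₂, h₃, h₄, h₅, h₆⟩ := h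
  refine ⟨?_, ?_, ?_, ?_, ?_, ?_⟩ <;> simp only [Function.comp_apply, ← map_pow, ← map_mul,
    ← map_add, ← map_sub, ← map_neg] <;> congr 1

lemma of_map {f : R →+* S} (hf : Function.Injective f)
    (h : QuaternionEmbeddingSystem (f a) (f b) (f ∘ u) (f ∘ v) (f s) (f t)) :
    QuaternionEmbeddingSystem a b u v s t := by
  obtain ⟨h₁, h₂, h₃, h₄, h₅, h₆⟩ := h
  simp only [Function.comp_apply, ← map_pow, ← map_mul, ← map_add, ← map_sub, ← map_neg] at *
  exact ⟨hf h₁, hf h₂, hf h₃, hf h₄, hf h₅, hf h₆⟩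

end QuaternionEmbeddingSystem

/-- The least positive common denominator `s` of the `u i` is `p`-primitive: if `p` divided `s`
and all the numerators, `s / p` would be a smaller common denominator. -/
lemma exists_primitive_int_multiple {ι : Type*} [Fintype ι] (u : ι → ℚ) {p : ℕ} (hp : p ≠ 1) :
    ∃ (U : ι → ℤ) (s : ℤ), (∀ i, (U i : ℚ) = s * u i) ∧ ¬ ((p : ℤ) ∣ s ∧ ∀ i, (p : ℤ) ∣ U i) := by
  classical
  have hex : ∃ n : ℕ, 0 < n ∧ ∀ i, ∃ U : ℤ, (U : ℚ) = n * u i := by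
    refine ⟨∏ i, (u i).den, prod_pos fun i _ => (u i).pos, fun i => ?_⟩
    refine ⟨(u i).num * ∏ j ∈ univ.erase i, (u j).den, ?_⟩
    rw [← mul_prod_erase univ (fun j => (u j).den) (mem_univ i)]
    push_cast
    rw [← Rat.den_mul_eq_num]
    ring
  obtain ⟨hn, hU⟩ := Nat.find_spec hex
  choose U hU using hU
  refine ⟨U, Nat.find hex, hU, ?_⟩
  rintro ⟨hps, hpU⟩
  obtain ⟨m, hm⟩ := Int.natCast_dvd_natCast.mp hps
  have hp0 : p ≠ 0 := by rintro rfl; rw [zero_mul] at hm; omega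
  have hm0 : 0 < m := Nat.pos_of_mul_pos_left (hm ▸ hn)
  have hlt : m < Nat.find hex := by
    rw [hm]
    exact lt_mul_left hm0 (by omega)
  refine Nat.find_min hex hlt ⟨hm0, fun i => ?_⟩
  obtain ⟨V, hV⟩ := hpU i
  refine ⟨V, mul_left_cancel₀ (by exact_mod_cast hp0 : (p : ℚ) ≠ 0) ?_⟩
  have := hU i
  rw [hV, hm] at this
  push_cast at this
  linear_combination this

lemma eq_zero_of_sq_eq_mul_sq {K : Type*} [Field K] {c x y : K} (hc : ¬ IsSquare c)
    (h : x ^ 2 = c * y ^ 2) : x = 0 ∧ y = 0 := by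
  by_cases hy : y = 0
  · subst hy
    exact ⟨pow_eq_zero_iff two_ne_zero |>.mp (by rw [h]; ring), rfl⟩
  · exact absurd ⟨x / y, by field_simp; linear_combination -h⟩ hc

section Reduction

variable {p : ℕ} [Fact p.Prime] {e d s t : ℤ} {U V : Fin 4 → ℤ}

lemma intCast_eq_zero_of_sq_add_mul_sq_add_sq_eq {c X Y W M : ℤ} (he : (e : ZMod p) ≠ 0)
    (hX : (X : ZMod p) = 0) (hY : (Y : ZMod p) = 0) (hW : (W : ZMod p) = 0)
    (h : X ^ 2 + c * Y ^ 2 + W ^ 2 = p * e * M) : (M : ZMod p) = 0 := by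
  have hp : Prime (p : ℤ) := Nat.prime_iff_prime_int.mp Fact.out
  simp only [ne_eq, ZMod.intCast_zmod_eq_zero_iff_dvd] at *
  obtain ⟨x, rfl⟩ := hX
  obtain ⟨y, rfl⟩ := hY
  obtain ⟨w, rfl⟩ := hW
  have : p * (x ^ 2 + c * y ^ 2 + w ^ 2) = e * M :=
    mul_left_cancel₀ hp.ne_zero (by linear_combination h)
  exact (hp.dvd_mul.mp ⟨_, this.symm⟩).resolve_left he

namespace QuaternionEmbeddingSystem

lemma reduce (h : QuaternionEmbeddingSystem ((p : ℤ) * e) d U V s t) :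
    QuaternionEmbeddingSystem (0 : ZMod p) d (fun i => U i) (fun i => V i) s t := by
  simpa [Function.comp_def] using h.map (Int.castRingHom (ZMod p))

lemma v_zero_ne_zero (he : (e : ZMod p) ≠ 0) (hd : ¬ IsSquare (-d : ZMod p))
    (hV : ¬ ((t : ZMod p) = 0 ∧ ∀ i, (V i : ZMod p) = 0))
    (h : QuaternionEmbeddingSystem ((p : ℤ) * e) d U V s t) : (V 0 : ZMod p) ≠ 0 := by
  intro h₀
  obtain ⟨-, h₂, -⟩ := h.reduce
  beta_reduce at h₂
  obtain ⟨ht, h₂⟩ := eq_zero_of_sq_eq_mul_sq (x := (t : ZMod p)) (y := (V 2 : ZMod p)) hd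
    (by linear_combination h₂ - h₀ * (V 0 : ZMod p))
  have h₁₃ := intCast_eq_zero_of_sq_add_mul_sq_add_sq_eq (M := V 1 ^ 2 + d * V 3 ^ 2) (c := d)
    he h₀ h₂ ht (by linear_combination h.2.1)
  push_cast at h₁₃
  obtain ⟨h₁, h₃⟩ := eq_zero_of_sq_eq_mul_sq (x := (V 1 : ZMod p)) (y := (V 3 : ZMod p)) hd
    (by linear_combination h₁₃)
  exact hV ⟨ht, fun i => by fin_cases i <;> assumption⟩

lemma false_of_primitive (he : (e : ZMod p) ≠ 0) (hd : ¬ IsSquare (-d : ZMod p))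
    (hU : ¬ ((s : ZMod p) = 0 ∧ ∀ i, (U i : ZMod p) = 0))
    (hV : ¬ ((t : ZMod p) = 0 ∧ ∀ i, (V i : ZMod p) = 0))
    (h : QuaternionEmbeddingSystem ((p : ℤ) * e) d U V s t) : False := by
  have hv₀ := h.v_zero_ne_zero he hd hV
  obtain ⟨h₁, h₂, h₃, h₄, h₅, h₆⟩ := h.reduce
  beta_reduce at h₁ h₂ h₃ h₄ h₅ h₆
  have hu₀ : (U 0 : ZMod p) = 0 := by simpa [hv₀] using h₃
  have hu₂ : (U 2 : ZMod p) = 0 := by simpa [hv₀] using h₅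
  have hs : (s : ZMod p) = 0 := by
    rw [hu₀, hu₂] at h₁
    exact pow_eq_zero_iff two_ne_zero |>.mp (by linear_combination h₁)
  have h₁₃ := intCast_eq_zero_of_sq_add_mul_sq_add_sq_eq (M := d * U 3 ^ 2 - U 1 ^ 2)
    (c := -d) he hu₀ hu₂ hs (by linear_combination h.1)
  push_cast at h₁₃
  suffices (U 1 : ZMod p) = 0 ∧ (U 3 : ZMod p) = 0 from
    hU ⟨hs, fun i => by fin_cases i <;> simp [hu₀, hu₂, this]⟩
  by_cases hv₂ : (V 2 : ZMod p) = 0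
  · have ht : (t : ZMod p) ≠ 0 := by
      intro ht
      rw [hv₂, ht] at h₂
      exact hv₀ (pow_eq_zero_iff two_ne_zero |>.mp (by linear_combination h₂))
    -- `v₀² = -t²` makes `-1` a square, so `d` is not one
    have hd' : ¬ IsSquare (d : ZMod p) := by
      rintro ⟨r, hr⟩
      refine hd ⟨V 0 * (t : ZMod p)⁻¹ * r, ?_⟩
      rw [hv₂] at h₂
      field_simp
      linear_combination (-r ^ 2) * h₂ - t ^ 2 * hr
    exact eq_zero_of_sq_eq_mul_sq hd' (by linear_combination -h₁₃)
  · have hd₀ : (d : ZMod p) ≠ 0 := fun h₀ => hd ⟨0, by rw [h₀]; simp⟩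
    rw [hu₀] at h₄
    rw [hu₂] at h₆
    exact ⟨by simpa [hv₂] using h₆, by simpa [hd₀, hv₂] using h₄⟩

end QuaternionEmbeddingSystem

lemma not_quaternionEmbeddingSystem_rat (he : ¬ (p : ℤ) ∣ e) (hd : ¬ IsSquare (-d : ZMod p))
    (u v : Fin 4 → ℚ) : ¬ QuaternionEmbeddingSystem ((p * e : ℤ) : ℚ) d u v 1 1 := by
  intro h
  obtain ⟨U, s, hU, hUp⟩ := exists_primitive_int_multiple u (Fact.out : p.Prime).ne_one
  obtain ⟨V, t, hV, hVp⟩ := exists_primitive_int_multiple v (Fact.out : p.Prime).ne_one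
  have hsys : QuaternionEmbeddingSystem ((p : ℤ) * e) d U V s t := by
    refine QuaternionEmbeddingSystem.of_map (f := Int.castRingHom ℚ) Int.cast_injective ?_
    convert h.smul (s : ℚ) (t : ℚ) using 1 <;> simp [funext_iff, hU, hV]
  simp only [← ZMod.intCast_zmod_eq_zero_iff_dvd] at he hUp hVp
  exact hsys.false_of_primitive he hd hUp hVp

end Reduction

section Quaternion

variable {G : Type*} [Group G]

lemma exists_mul_self_eq_of_mul_self_eq_one (φ : G ≃* QuaternionGroup 2) {g : G}
    (hg : g * g = 1) : ∃ h, h * h = g := by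
  have key : ∀ q : QuaternionGroup 2, q * q = 1 → ∃ r, r * r = q := by decide
  obtain ⟨r, hr⟩ := key (φ g) (by rw [← map_mul, hg, map_one])
  exact ⟨φ.symm r, φ.injective (by rw [map_mul, φ.apply_symm_apply, hr])⟩

lemma quaternion_relations (φ : G ≃* QuaternionGroup 2) {i j : G} (hi : i * i ≠ 1)
    (hj : j * j ≠ 1) (hij : i * j * (i * j) ≠ 1) :
    i * i * (i * i) = 1 ∧ j * j = i * i ∧ j * i = i * j * (i * i) := by
  have key : ∀ I J : QuaternionGroup 2, I * I ≠ 1 → J * J ≠ 1 → I * J * (I * J) ≠ 1 →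
      I * I * (I * I) = 1 ∧ J * J = I * I ∧ J * I = I * J * (I * I) := by
    decide
  have h := key (φ i) (φ j) (by rw [← map_mul]; exact φ.map_ne_one_iff.mpr hi)
    (by rw [← map_mul]; exact φ.map_ne_one_iff.mpr hj)
    (by simp only [← map_mul]; exact φ.map_ne_one_iff.mpr hij)
  simp only [← map_mul, ← map_one φ, φ.injective.eq_iff] at h
  exact h

end Quaternion

section Galois

variable {F L : Type*} [Field F] [Field L] [Algebra F L] {a b : F} {x y : L}

local notation "ι" => algebraMap F L

lemma AlgEquiv.apply_eq_or_eq_neg_of_sq_eq (σ : L ≃ₐ[F] L) (hx : x ^ 2 = ι a) :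
    σ x = x ∨ σ x = -x :=
  sq_eq_sq_iff_eq_or_eq_neg.mp (by rw [← map_pow, hx, AlgEquiv.commutes])

lemma AlgEquiv.mul_self_apply_eq_of_sq_eq (σ : L ≃ₐ[F] L) (hx : x ^ 2 = ι a) :
    (σ * σ) x = x := by
  rcases σ.apply_eq_or_eq_neg_of_sq_eq hx with h | h <;> simp [h]

lemma ne_zero_of_sq_eq (ha : ¬ IsSquare a) (hx : x ^ 2 = ι a) : x ≠ 0 := by
  rintro rfl
  exact ha ⟨0, by rw [mul_zero, ← FaithfulSMul.algebraMap_eq_zero_iff F L, ← hx]; ring⟩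

lemma mul_self_ne_one_of_apply_eq_neg [NeZero (2 : L)] (φ : (L ≃ₐ[F] L) ≃* QuaternionGroup 2)
    {σ : L ≃ₐ[F] L} (hx : x ^ 2 = ι a) (hx₀ : x ≠ 0) (hσ : σ x = -x) : σ * σ ≠ 1 := by
  intro h
  obtain ⟨τ, rfl⟩ := exists_mul_self_eq_of_mul_self_eq_one φ h
  have h2x : 2 * x = 0 := by
    linear_combination -hσ.symm.trans (τ.mul_self_apply_eq_of_sq_eq hx)
  simp [two_ne_zero, hx₀] at h2x

lemma AlgEquiv.apply_div_self_fixed_and_mul_eq_neg_one {g z : L ≃ₐ[F] L} (hg : g * g = z)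
    {w : L} (hw : w ≠ 0) (hzw : z w = -w) : z (g w / w) = g w / w ∧ g (g w / w) * (g w / w) = -1 := by
  have hgw : g w ≠ 0 := by simpa using hw
  have hzg : z (g w) = -g w := by
    rw [← AlgEquiv.mul_apply, ← hg, mul_assoc, hg, AlgEquiv.mul_apply, hzw, map_neg]
  refine ⟨by rw [map_div₀, hzg, hzw, neg_div_neg_eq], ?_⟩
  rw [map_div₀, ← AlgEquiv.mul_apply, hg, hzw]
  field_simp

lemma exists_quaternion_cocycle {z i j : L ≃ₐ[F] L} (hz : z ≠ 1) (hzz : z * z = 1)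
    (hi : i * i = z) (hj : j * j = z) (hji : j * i = i * j * z) :
    ∃ A B : L, z A = A ∧ z B = B ∧ i A * A = -1 ∧ j B * B = -1 ∧ j A * B = -(i B * A) := by
  obtain ⟨θ, hθ⟩ : ∃ θ, z θ ≠ θ := by
    by_contra! h
    exact hz (AlgEquiv.ext h)
  set w := θ - z θ
  have hw : w ≠ 0 := sub_ne_zero.mpr hθ.symm
  have hzw : z w = -w := by
    rw [map_sub, ← AlgEquiv.mul_apply, hzz, AlgEquiv.one_apply, neg_sub]
  obtain ⟨hzA, hiA⟩ := AlgEquiv.apply_div_self_fixed_and_mul_eq_neg_one hi hw hzw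
  obtain ⟨hzB, hjB⟩ := AlgEquiv.apply_div_self_fixed_and_mul_eq_neg_one hj hw hzw
  refine ⟨i w / w, j w / w, hzA, hzB, hiA, hjB, ?_⟩
  have hiw : i w ≠ 0 := by simpa using hw
  have hjw : j w ≠ 0 := by simpa using hw
  have hjiw : j (i w) = -i (j w) := by
    rw [← AlgEquiv.mul_apply, hji, AlgEquiv.mul_apply, hzw, map_neg, AlgEquiv.mul_apply]
  simp only [map_div₀, hjiw]
  field_simp

lemma eq_zero_of_add_mul_eq_zero_of_apply_eq_neg [NeZero (2 : L)] {σ : L ≃ₐ[F] L} {u v : L}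
    (hy : y ≠ 0) (hσy : σ y = -y) (hu : σ u = u) (hv : σ v = v) (h : u + v * y = 0) : u = 0 ∧ v = 0 := by
  have h' : u - v * y = 0 := by
    simpa [hu, hv, hσy, ← sub_eq_add_neg] using congrArg σ h
  have hu : 2 * u = 0 := by linear_combination h + h'
  have hv : 2 * v * y = 0 := by linear_combination h - h'
  exact ⟨by simpa [two_ne_zero] using hu, by simpa [two_ne_zero, hy] using hv⟩

lemma eq_zero_of_biquadratic_eq_zero [NeZero (2 : L)] {i j : L ≃ₐ[F] L} (hx : x ≠ 0)
    (hy : y ≠ 0) (hix : i x = x) (hiy : i y = -y) (hjx : j x = -x) (r₀ r₁ r₂ r₃ : F)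
    (h : ι r₀ + ι r₁ * x + ι r₂ * y + ι r₃ * (x * y) = 0) :
    r₀ = 0 ∧ r₁ = 0 ∧ r₂ = 0 ∧ r₃ = 0 := by
  obtain ⟨h₀₁, h₂₃⟩ := eq_zero_of_add_mul_eq_zero_of_apply_eq_neg (u := ι r₀ + ι r₁ * x)
    (v := ι r₂ + ι r₃ * x) hy hiy (by simp [hix]) (by simp [hix]) (by linear_combination h)
  obtain ⟨h₀, h₁⟩ := eq_zero_of_add_mul_eq_zero_of_apply_eq_neg hx hjx (by simp) (by simp) h₀₁
  obtain ⟨h₂, h₃⟩ := eq_zero_of_add_mul_eq_zero_of_apply_eq_neg hx hjx (by simp) (by simp) h₂₃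
  simp only [FaithfulSMul.algebraMap_eq_zero_iff] at h₀ h₁ h₂ h₃
  exact ⟨h₀, h₁, h₂, h₃⟩

lemma quaternionEmbeddingSystem_of_cocycle [NeZero (2 : L)] {i j : L ≃ₐ[F] L}
    (hx : x ^ 2 = ι a) (hy : y ^ 2 = ι b) (hx₀ : x ≠ 0) (hy₀ : y ≠ 0)
    (hix : i x = x) (hiy : i y = -y) (hjx : j x = -x) (hjy : j y = y) {u v : Fin 4 → F}
    {A B : L} (hA : A = ι (u 0) + ι (u 1) * x + ι (u 2) * y + ι (u 3) * (x * y))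
    (hB : B = ι (v 0) + ι (v 1) * x + ι (v 2) * y + ι (v 3) * (x * y))
    (hiA : i A * A = -1) (hjB : j B * B = -1) (hAB : j A * B = -(i B * A)) :
    QuaternionEmbeddingSystem a b u v 1 1 := by
  have hiA' : i A = ι (u 0) + ι (u 1) * x - ι (u 2) * y - ι (u 3) * (x * y) := by
    simp only [hA, map_add, map_mul, AlgEquiv.commutes, hix, hiy]; ring
  have hjA' : j A = ι (u 0) - ι (u 1) * x + ι (u 2) * y - ι (u 3) * (x * y) := by
    simp only [hA, map_add, map_mul, AlgEquiv.commutes, hjx, hjy]; ring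
  have hiB' : i B = ι (v 0) + ι (v 1) * x - ι (v 2) * y - ι (v 3) * (x * y) := by
    simp only [hB, map_add, map_mul, AlgEquiv.commutes, hix, hiy]; ring
  have hjB' : j B = ι (v 0) - ι (v 1) * x + ι (v 2) * y - ι (v 3) * (x * y) := by
    simp only [hB, map_add, map_mul, AlgEquiv.commutes, hjx, hjy]; ring
  rw [hiA', hA] at hiA
  rw [hjB', hB] at hjB
  rw [hjA', hiB', hA, hB] at hAB
  have indep := eq_zero_of_biquadratic_eq_zero hx₀ hy₀ hix hiy hjx
  obtain ⟨h₁, -⟩ := indep (u 0 ^ 2 + a * u 1 ^ 2 - b * u 2 ^ 2 - a * b * u 3 ^ 2 + 1)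
    (2 * (u 0 * u 1 - b * u 2 * u 3)) 0 0 (by
      simp only [map_add, map_sub, map_mul, map_pow, map_one, map_zero, map_ofNat]
      linear_combination hiA + (ι b * ι (u 3) ^ 2 - ι (u 1) ^ 2) * hx
        + (ι (u 2) ^ 2 + 2 * ι (u 2) * ι (u 3) * x + ι (u 3) ^ 2 * x ^ 2) * hy)
  obtain ⟨h₂, -⟩ := indep (v 0 ^ 2 - a * v 1 ^ 2 + b * v 2 ^ 2 - a * b * v 3 ^ 2 + 1)
    0 (2 * (v 0 * v 2 - a * v 1 * v 3)) 0 (by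
      simp only [map_add, map_sub, map_mul, map_pow, map_one, map_zero, map_ofNat]
      linear_combination hjB + (ι (v 1) ^ 2 + 2 * ι (v 1) * ι (v 3) * y + ι (v 3) ^ 2 * y ^ 2) * hx
        + (ι a * ι (v 3) ^ 2 - ι (v 2) ^ 2) * hy)
  obtain ⟨h₃, h₄, h₅, h₆⟩ := indep (u 0 * v 0 - a * b * u 3 * v 3) (u 0 * v 1 - b * u 3 * v 2)
    (u 2 * v 0 - a * u 1 * v 3) (u 2 * v 1 - u 1 * v 2) (mul_left_cancel₀ two_ne_zero (by
      simp only [map_sub, map_mul]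
      linear_combination hAB + (2 * ι (u 3) * ι (v 3) * y ^ 2 + 2 * ι (u 1) * ι (v 3) * y) * hx
        + (2 * ι a * ι (u 3) * ι (v 3) + 2 * ι (u 3) * ι (v 2) * x) * hy))
  exact ⟨by linear_combination h₁, by linear_combination h₂, by linear_combination h₃,
    by linear_combination h₄, by linear_combination h₅, by linear_combination h₆⟩

variable [FiniteDimensional F L]

lemma mem_span_of_apply_eq {z : L ≃ₐ[F] L} {n : ℕ} {v : Fin n → L}
    (hv : LinearIndependent F v) (hvz : ∀ k, z (v k) = v k)
    (hdim : n * orderOf z = Module.finrank F L) {t : L} (ht : z t = t) :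
    t ∈ Submodule.span F (Set.range v) := by
  set K := IntermediateField.fixedField (Subgroup.zpowers z)
  have hmem : ∀ {s : L}, z s = s → s ∈ K := fun hs =>
    (IntermediateField.mem_fixedField_iff _ _).mpr fun g hg =>
      Subgroup.zpowers_le (H := MulAction.stabilizer _ _) |>.mpr hs hg
  have hK : Module.finrank F K = n := by
    have htower := Module.finrank_mul_finrank F K L
    rw [IntermediateField.finrank_fixedField_eq_card, Nat.card_zpowers, ← hdim] at htower
    exact Nat.eq_of_mul_eq_mul_right (orderOf_pos z) htower
  have hle : Submodule.span F (Set.range v) ≤ Subalgebra.toSubmodule K.toSubalgebra := by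
    rw [Submodule.span_le]
    rintro _ ⟨k, rfl⟩
    exact hmem (hvz k)
  have heq := Submodule.eq_of_le_of_finrank_le hle (by
    rw [finrank_span_eq_card hv, Fintype.card_fin]
    exact hK.le)
  rw [heq]
  exact hmem ht

variable [IsGalois F L]

lemma isSquare_of_forall_apply_eq (hx : x ^ 2 = ι a) (h : ∀ σ : L ≃ₐ[F] L, σ x = x) :
    IsSquare a := by
  obtain ⟨r, rfl⟩ := (IsGalois.mem_range_algebraMap_iff_fixed x).mpr h
  exact ⟨r, (algebraMap F L).injective (by rw [map_mul, ← sq, hx])⟩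

lemma exists_apply_eq_neg (ha : ¬ IsSquare a) (hx : x ^ 2 = ι a) :
    ∃ σ : L ≃ₐ[F] L, σ x = -x := by
  by_contra! h
  exact ha (isSquare_of_forall_apply_eq hx fun σ =>
    (σ.apply_eq_or_eq_neg_of_sq_eq hx).resolve_right (h σ))

lemma exists_apply_eq_self_apply_eq_neg (hb : ¬ IsSquare b) (hab : ¬ IsSquare (a * b))
    (hx : x ^ 2 = ι a) (hy : y ^ 2 = ι b) : ∃ σ : L ≃ₐ[F] L, σ x = x ∧ σ y = -y := by
  by_contra! h
  have hfix : ∀ τ : L ≃ₐ[F] L, τ x = x → τ y = y := fun τ hτ =>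
    (τ.apply_eq_or_eq_neg_of_sq_eq hy).resolve_right (h τ hτ)
  obtain ⟨ν, hνy⟩ := exists_apply_eq_neg hb hy
  have hνx : ν x = -x := (ν.apply_eq_or_eq_neg_of_sq_eq hx).resolve_left fun h' => h ν h' hνy
  refine hab (isSquare_of_forall_apply_eq (x := x * y) (by rw [mul_pow, hx, hy, map_mul])
    fun σ => ?_)
  rcases σ.apply_eq_or_eq_neg_of_sq_eq hx with hσx | hσx
  · rw [map_mul, hσx, hfix σ hσx]
  · have hσν := hfix (σ * ν) (by rw [AlgEquiv.mul_apply, hνx, map_neg, hσx, neg_neg])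
    rw [AlgEquiv.mul_apply, hνy, map_neg, neg_eq_iff_eq_neg] at hσν
    rw [map_mul, hσx, hσν, neg_mul_neg]

lemma exists_eq_biquadratic_of_apply_eq [NeZero (2 : L)] (φ : (L ≃ₐ[F] L) ≃* QuaternionGroup 2)
    {i j : L ≃ₐ[F] L} (hx : x ^ 2 = ι a) (hy : y ^ 2 = ι b) (hx₀ : x ≠ 0) (hy₀ : y ≠ 0)
    (hix : i x = x) (hiy : i y = -y) (hjx : j x = -x) (hzz : i * i * (i * i) = 1)
    (hz : i * i ≠ 1) {t : L} (ht : (i * i) t = t) :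
    ∃ u : Fin 4 → F, t = ι (u 0) + ι (u 1) * x + ι (u 2) * y + ι (u 3) * (x * y) := by
  have hv : LinearIndependent F ![1, x, y, x * y] := by
    rw [Fintype.linearIndependent_iff]
    intro r hr
    simp only [Fin.sum_univ_four, Matrix.cons_val, Algebra.smul_def, mul_one] at hr
    obtain ⟨h₀, h₁, h₂, h₃⟩ := eq_zero_of_biquadratic_eq_zero hx₀ hy₀ hix hiy hjx _ _ _ _ hr
    intro k
    fin_cases k <;> assumption
  have hvz : ∀ k, (i * i) (![1, x, y, x * y] k) = ![1, x, y, x * y] k := by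
    intro k
    fin_cases k <;>
      simp [i.mul_self_apply_eq_of_sq_eq hx, i.mul_self_apply_eq_of_sq_eq hy, -AlgEquiv.mul_apply]
  have hdim : 4 * orderOf (i * i) = Module.finrank F L := by
    rw [orderOf_eq_prime (by rw [sq]; exact hzz) hz, ← IsGalois.card_aut_eq_finrank,
      Nat.card_congr φ.toEquiv, Nat.card_eq_fintype_card, QuaternionGroup.card]
  obtain ⟨u, hu⟩ := (Submodule.mem_span_range_iff_exists_fun F).mp
    (mem_span_of_apply_eq hv hvz hdim ht)
  refine ⟨u, ?_⟩
  simp only [← hu, Fin.sum_univ_four, Matrix.cons_val, Algebra.smul_def, mul_one]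

theorem exists_quaternionEmbeddingSystem [NeZero (2 : L)]
    (φ : (L ≃ₐ[F] L) ≃* QuaternionGroup 2) (ha : ¬ IsSquare a) (hb : ¬ IsSquare b)
    (hab : ¬ IsSquare (a * b)) (hx : x ^ 2 = ι a) (hy : y ^ 2 = ι b) :
    ∃ u v : Fin 4 → F, QuaternionEmbeddingSystem a b u v 1 1 := by
  have hx₀ := ne_zero_of_sq_eq ha hx
  have hy₀ := ne_zero_of_sq_eq hb hy
  obtain ⟨i, hix, hiy⟩ := exists_apply_eq_self_apply_eq_neg hb hab hx hy
  obtain ⟨j, hjy, hjx⟩ := exists_apply_eq_self_apply_eq_neg ha (by rwa [mul_comm]) hy hx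
  have hijx : (i * j) x = -x := by rw [AlgEquiv.mul_apply, hjx, map_neg, hix]
  have hz := mul_self_ne_one_of_apply_eq_neg φ hy hy₀ hiy
  obtain ⟨hzz, hj, hji⟩ := quaternion_relations φ hz
    (mul_self_ne_one_of_apply_eq_neg φ hx hx₀ hjx) (mul_self_ne_one_of_apply_eq_neg φ hx hx₀ hijx)
  obtain ⟨A, B, hzA, hzB, hiA, hjB, hAB⟩ := exists_quaternion_cocycle hz hzz rfl hj hji
  obtain ⟨u, hA⟩ := exists_eq_biquadratic_of_apply_eq φ hx hy hx₀ hy₀ hix hiy hjx hzz hz hzA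
  obtain ⟨v, hB⟩ := exists_eq_biquadratic_of_apply_eq φ hx hy hx₀ hy₀ hix hiy hjx hzz hz hzB
  exact ⟨u, v, quaternionEmbeddingSystem_of_cocycle hx hy hx₀ hy₀ hix hiy hjx hjy hA hB hiA hjB hAB⟩

end Galois

theorem no_quaternion_field_of_Delta_neg_one_general (S T : Finset ℕ)
    (hS : ∀ p ∈ S, Nat.Prime p ∧ Odd p) (hT : ∀ q ∈ T, Nat.Prime q ∧ Odd q)
    (d1 d2 : ℤ)
    (hd1 : d1 = ∏ p ∈ S, ((-1 : ℤ) ^ ((p - 1) / 2) * (p : ℤ)))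
    (hd2 : d2 = ∏ q ∈ T, ((-1 : ℤ) ^ ((q - 1) / 2) * (q : ℤ)))
    (hd1pos : 0 < d1)
    (hDelta : ∏ p ∈ S, ∏ q ∈ T, jacobiSym (q : ℤ) p = -1) :
    ∀ (L : Type) [Field L] [NumberField L] [IsGalois ℚ L],
      Nonempty ((L ≃ₐ[ℚ] L) ≃* QuaternionGroup 2) →
      Odd (NumberField.discr L) →
      ¬ ((∃ x : L, x ^ 2 = (d1 : L)) ∧ (∃ y : L, y ^ 2 = (d2 : L))) := by
  rintro L _ _ _ ⟨φ⟩ - ⟨⟨x, hx⟩, ⟨y, hy⟩⟩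
  change d1 = ∏ p ∈ S, primeStar p at hd1
  change d2 = ∏ q ∈ T, primeStar q at hd2
  obtain ⟨p, hpS, hp⟩ := exists_mem_not_isSquare_neg_prod_primeStar T hS (hd1 ▸ hd1pos) hDelta
  rw [← hd2] at hp
  have : Fact p.Prime := ⟨(hS p hpS).1⟩
  obtain ⟨e, hd1e, he⟩ : ∃ e, d1 = p * e ∧ ¬ (p : ℤ) ∣ e := by
    rw [hd1]
    exact exists_prod_primeStar_eq_mul (fun q hq => (hS q hq).1) hpS
  have hT₀ : T.Nonempty := nonempty_iff_ne_empty.mpr (by rintro rfl; simp at hDelta)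
  have hpd2 : ¬ (p : ℤ) ∣ d2 := by
    rw [← ZMod.intCast_zmod_eq_zero_iff_dvd]
    exact fun h0 => hp ⟨0, by rw [h0]; simp⟩
  obtain ⟨u, v, hsys⟩ := exists_quaternionEmbeddingSystem (a := (d1 : ℚ)) (b := (d2 : ℚ)) φ
    (by rw [hd1e]; exact not_isSquare_mul_of_not_dvd this.out he)
    (by rw [hd2]; exact not_isSquare_prod_primeStar (fun q hq => (hT q hq).1) hT₀)
    (by
      rw [← Int.cast_mul, hd1e, mul_assoc]
      exact not_isSquare_mul_of_not_dvd this.out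
        (Prime.not_dvd_mul (Nat.prime_iff_prime_int.mp this.out) he hpd2))
    (by rw [hx, map_intCast]) (by rw [hy, map_intCast])
  exact not_quaternionEmbeddingSystem_rat he hp u v (by rwa [← hd1e])

/-- Let `S`, `T` be disjoint finite sets of odd primes, and with
`p* = (−1)^((p−1)/2)·p` let `d₁ = ∏_{p∈S} p*` and `d₂ = ∏_{q∈T} q*`, both positive.
If `Δ(d₁,d₂) = ∏_{p∈S} ∏_{q∈T} (q/p) = −1`, then there is no number field `L`, Galois
over `ℚ` with Galois group isomorphic to the quaternion group `Q₈` of order 8 and odd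
discriminant, containing square roots of `d₁` and of `d₂`
(equivalently, with `ℚ(√d₁,√d₂) ⊆ L`). -/
theorem no_quaternion_field_of_Delta_neg_one (S T : Finset ℕ)
    (hS : ∀ p ∈ S, Nat.Prime p ∧ Odd p) (hT : ∀ q ∈ T, Nat.Prime q ∧ Odd q)
    (hST : Disjoint S T)
    (d1 d2 : ℤ)
    (hd1 : d1 = ∏ p ∈ S, ((-1 : ℤ) ^ ((p - 1) / 2) * (p : ℤ)))
    (hd2 : d2 = ∏ q ∈ T, ((-1 : ℤ) ^ ((q - 1) / 2) * (q : ℤ)))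
    (hd1pos : 0 < d1) (hd2pos : 0 < d2)
    (hDelta : ∏ p ∈ S, ∏ q ∈ T, jacobiSym (q : ℤ) p = -1) :
    ∀ (L : Type) [Field L] [NumberField L] [IsGalois ℚ L],
      Nonempty ((L ≃ₐ[ℚ] L) ≃* QuaternionGroup 2) →
      Odd (NumberField.discr L) →
      ¬ ((∃ x : L, x ^ 2 = (d1 : L)) ∧ (∃ y : L, y ^ 2 = (d2 : L))) :=
  no_quaternion_field_of_Delta_neg_one_general S T hS hT d1 d2 hd1 hd2 hd1pos hDelta
end

section
/- Let L be a number field that is Galois over ℚ with Galois group Gal(L/ℚ) isomorphic to the quaternion group Q₈ of order 8, and suppose the discriminant of L is odd. Let H be a subgroup of Gal(L/ℚ) of order 2 and let K be the fixed field of H. Then K is totally real, and there exist squarefree integers d₁, d₂ > 1 with d₁ ≠ d₂, d₁ ≡ 1 (mod 4) and d₂ ≡ 1 (mod 4), such that K = ℚ(√d₁, √d₂), i.e., K is generated over ℚ by elements x, y with x² = d₁ and y² = d₂. -/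
/-!
The quaternion group has a unique involution, so `H` is its centre and contains every `σ` with
`σ ^ 2 = 1`. Complex conjugation, pulled back to `L` along an embedding, is such a `σ`; it therefore
fixes `K`, which is thus totally real. The centre is the intersection of two cyclic subgroups of
order four, so `K` is the compositum of their fixed fields, two distinct real quadratic fields
`ℚ(√d₁)` and `ℚ(√d₂)` with `dᵢ` squarefree.

Since the discriminant of `L` is odd, `𝓞 L / 2` is reduced: the trace form is nondegenerate
modulo 2, and nilpotent elements have trace zero. If `c ∈ {0, 1}` has the parity of `d`, then
`(√d + c) ^ 2 ≡ d + c ^ 2 ≡ 0` modulo 2, so `w = (√d + c) / 2` is integral and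
`w ^ 2 - c w = (d - c ^ 2) / 4` is a rational integer. For odd `d` this says `d ≡ 1 mod 4`, and
for even `d` it contradicts squarefreeness.
-/

open NumberField Module IntermediateField Polynomial NumberField.ComplexEmbedding

namespace QuaternionGroup

variable {G : Type*} [Group G] {H : Subgroup G}

theorem sq_eq_one_iff (g : QuaternionGroup 2) : g ^ 2 = 1 ↔ g = 1 ∨ g = a 2 := by
  revert g; decide

theorem mem_zpowers_a_one_inf_zpowers_xa_zero_iff (g : QuaternionGroup 2) :
    g ∈ Subgroup.zpowers (a 1) ⊓ Subgroup.zpowers (xa 0) ↔ g ^ 2 = 1 := by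
  classical
  rw [Subgroup.mem_inf, mem_zpowers_iff_mem_range_orderOf, mem_zpowers_iff_mem_range_orderOf,
    orderOf_a_one, orderOf_xa]
  revert g; decide

theorem mem_iff_sq_eq_one (e : G ≃* QuaternionGroup 2) (hH : Nat.card H = 2) (g : G) :
    g ∈ H ↔ g ^ 2 = 1 := by
  have sq_of_mem {x : G} (hx : x ∈ H) : x ^ 2 = 1 :=
    orderOf_dvd_iff_pow_eq_one.mp (hH ▸ H.orderOf_dvd_natCard hx)
  have eq_one_or {x : G} (hx : x ^ 2 = 1) : x = 1 ∨ e x = a 2 := by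
    simpa using (sq_eq_one_iff (e x)).mp (by rw [← map_pow, hx, map_one])
  refine ⟨sq_of_mem, fun hg ↦ ?_⟩
  obtain ⟨h, hhH, hh1⟩ := H.bot_or_exists_ne_one.resolve_left fun h ↦ by simp [h] at hH
  obtain rfl | hg := eq_one_or hg
  · exact H.one_mem
  · rwa [e.injective (hg.trans ((eq_one_or (sq_of_mem hhH)).resolve_left hh1).symm)]

theorem exists_card_four_inf_eq (e : G ≃* QuaternionGroup 2) (hH : Nat.card H = 2) :
    ∃ H₁ H₂ : Subgroup G, Nat.card H₁ = 4 ∧ Nat.card H₂ = 4 ∧ H₁ ⊓ H₂ = H := by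
  have hcard (x : QuaternionGroup 2) (hx : orderOf x = 4) :
      Nat.card ((Subgroup.zpowers x).map e.symm.toMonoidHom) = 4 := by
    rw [Subgroup.card_map_of_injective e.symm.injective, Nat.card_zpowers, hx]
  refine ⟨_, _, hcard (a 1) orderOf_a_one, hcard (xa 0) (orderOf_xa 0), ?_⟩
  ext g
  rw [← Subgroup.map_inf _ _ _ e.symm.injective, Subgroup.mem_map_equiv, MulEquiv.symm_symm,
    mem_zpowers_a_one_inf_zpowers_xa_zero_iff, ← map_pow, map_eq_one_iff _ e.injective,
    mem_iff_sq_eq_one e hH]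

end QuaternionGroup

theorem Int.exists_eq_sq_mul_squarefree {n : ℤ} (hn : n ≠ 0) :
    ∃ b d : ℤ, b ≠ 0 ∧ Squarefree d ∧ n = b ^ 2 * d := by
  obtain ⟨a, b, -, hb, hab, ha⟩ := Nat.sq_mul_squarefree_of_pos (Int.natAbs_pos.mpr hn)
  refine ⟨b, n.sign * a, by exact_mod_cast hb.ne', ?_, ?_⟩
  · rw [← Int.squarefree_natAbs, Int.natAbs_mul, Int.natAbs_sign_of_ne_zero hn, one_mul]
    exact_mod_cast ha
  · calc n = n.sign * n.natAbs := (Int.sign_mul_natAbs n).symm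
      _ = b ^ 2 * (n.sign * a) := by rw [← hab]; push_cast; ring

theorem Rat.exists_eq_sq_mul_squarefree {q : ℚ} (hq : q ≠ 0) :
    ∃ (r : ℚ) (d : ℤ), r ≠ 0 ∧ Squarefree d ∧ q = r ^ 2 * d := by
  have hden : (q.den : ℚ) ≠ 0 := by exact_mod_cast q.den_nz
  obtain ⟨b, d, hb, hd, hbd⟩ := Int.exists_eq_sq_mul_squarefree
    (mul_ne_zero (Rat.num_ne_zero.mpr hq) (Int.natCast_ne_zero.mpr q.den_nz))
  refine ⟨b / q.den, d, div_ne_zero (by exact_mod_cast hb) hden, hd, ?_⟩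
  have : (q.num * q.den : ℚ) = b ^ 2 * d := by exact_mod_cast hbd
  rw [← Rat.mul_den_eq_num q] at this
  field_simp
  linear_combination this

namespace IsGalois

variable {F E : Type*} [Field F] [Field E] [Algebra F E] [FiniteDimensional F E] [IsGalois F E]

theorem finrank_fixedField_mul_card (H : Subgroup Gal(E/F)) :
    finrank F (fixedField H) * Nat.card H = finrank F E := by
  rw [← finrank_fixedField_eq_card, finrank_mul_finrank]

theorem fixedField_inf (H₁ H₂ : Subgroup Gal(E/F)) :
    fixedField (H₁ ⊓ H₂) = fixedField H₁ ⊔ fixedField H₂ := by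
  rw [← fixedField_fixingSubgroup (fixedField H₁ ⊔ fixedField H₂), fixingSubgroup_sup,
    fixingSubgroup_fixedField, fixingSubgroup_fixedField]

end IsGalois

namespace IntermediateField

variable {K L : Type*} [Field K] [Field L] [Algebra K L]

theorem adjoin_simple_eq_of_finrank_eq_two {F : IntermediateField K L} (hF : finrank K F = 2)
    {x : L} (hxF : x ∈ F) (hx : x ∉ (⊥ : IntermediateField K L)) : K⟮x⟯ = F := by
  have := Module.finite_of_finrank_eq_succ hF
  have hle : K⟮x⟯ ≤ F := adjoin_simple_le_iff.mpr hxF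
  have hdvd : finrank K K⟮x⟯ ∣ 2 := hF ▸ finrank_dvd_of_le_right hle
  have hne : finrank K K⟮x⟯ ≠ 1 :=
    finrank_eq_one_iff.not.mpr (adjoin_simple_eq_bot_iff.not.mpr hx)
  refine eq_of_le_of_finrank_eq hle ?_
  rw [hF]
  exact ((Nat.dvd_prime Nat.prime_two).mp hdvd).resolve_left hne

theorem adjoin_simple_eq_of_sq_eq_sq {x y : L} (h : x ^ 2 = y ^ 2) : K⟮x⟯ = K⟮y⟯ := by
  have key {x y : L} (h : x ^ 2 = y ^ 2) : K⟮x⟯ ≤ K⟮y⟯ := adjoin_simple_le_iff.mpr <| by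
    obtain rfl | rfl := sq_eq_sq_iff_eq_or_eq_neg.mp h
    exacts [mem_adjoin_simple_self K _, neg_mem (mem_adjoin_simple_self K _)]
  exact le_antisymm (key h) (key h.symm)

/-- Completing the square: for `α ∈ F` outside `K`, the witness is `2 α + b`, where `b` is the
linear coefficient of the minimal polynomial of `α`. -/
theorem exists_sq_mem_bot_of_finrank_eq_two (h2 : (2 : K) ≠ 0) {F : IntermediateField K L}
    (hF : finrank K F = 2) :
    ∃ x ∈ F, x ∉ (⊥ : IntermediateField K L) ∧ x ^ 2 ∈ (⊥ : IntermediateField K L) := by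
  have := Module.finite_of_finrank_eq_succ hF
  have hne : F ≠ ⊥ := fun h ↦ by
    rw [h, IntermediateField.finrank_bot] at hF
    exact absurd hF (by norm_num)
  obtain ⟨α, hαF, hα⟩ := SetLike.not_le_iff_exists.mp (mt le_bot_iff.mp hne)
  have hint : IsIntegral K α := isIntegral_iff.mp (.of_finite K (⟨α, hαF⟩ : F))
  have hdeg : (minpoly K α).natDegree = 2 := by
    rw [← adjoin.finrank hint, adjoin_simple_eq_of_finrank_eq_two hF hαF hα, hF]
  have hroot := minpoly.aeval K α
  rw [(minpoly.monic hint).as_sum, hdeg] at hroot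
  set b := (minpoly K α).coeff 1
  set c := (minpoly K α).coeff 0
  simp only [Finset.sum_range_succ, Finset.sum_range_zero, map_add, map_pow, map_mul, aeval_X,
    aeval_C, zero_add, pow_zero, pow_one, mul_one] at hroot
  have h2L : (2 : L) ≠ 0 := by
    rw [← map_ofNat (algebraMap K L) 2]
    exact (_root_.map_ne_zero _).mpr h2
  refine ⟨2 * α + algebraMap K L b, add_mem (mul_mem (ofNat_mem F 2) hαF) (algebraMap_mem F b),
    fun h ↦ hα ?_, mem_bot.mpr ⟨b ^ 2 - 4 * c, ?_⟩⟩
  · have : α = (2 * α + algebraMap K L b - algebraMap K L b) / 2 := by field_simp; ring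
    rw [this]
    exact div_mem (sub_mem h (algebraMap_mem _ b)) (ofNat_mem _ 2)
  · rw [map_sub, map_mul, map_pow, map_ofNat]
    linear_combination (-4 : L) * hroot

theorem exists_squarefree_adjoin_eq_of_finrank_eq_two {L : Type*} [Field L] [CharZero L]
    {F : IntermediateField ℚ L} (hF : finrank ℚ F = 2) :
    ∃ d : ℤ, Squarefree d ∧ d ≠ 1 ∧ ∃ x : L, x ^ 2 = d ∧ ℚ⟮x⟯ = F := by
  obtain ⟨x, hxF, hx, q, hq⟩ := exists_sq_mem_bot_of_finrank_eq_two two_ne_zero hF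
  rw [eq_ratCast] at hq
  have hq0 : q ≠ 0 := by
    rintro rfl
    rw [Rat.cast_zero, eq_comm, pow_eq_zero_iff two_ne_zero] at hq
    exact hx (hq ▸ zero_mem _)
  obtain ⟨r, d, hr, hd, rfl⟩ := Rat.exists_eq_sq_mul_squarefree hq0
  have hr' : (r : L) ≠ 0 := Rat.cast_ne_zero.mpr hr
  have hy : ((r : L)⁻¹ * x) ^ 2 = d := by
    rw [mul_pow, ← hq]
    push_cast
    field_simp
  have hyF : (r : L)⁻¹ * x ∈ F := mul_mem (inv_mem (SubfieldClass.ratCast_mem F r)) hxF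
  have hy' : (r : L)⁻¹ * x ∉ (⊥ : IntermediateField ℚ L) := fun h ↦ hx <| by
    simpa [hr'] using mul_mem (SubfieldClass.ratCast_mem _ r) h
  refine ⟨d, hd, ?_, _, hy, adjoin_simple_eq_of_finrank_eq_two hF hyF hy'⟩
  rintro rfl
  rw [Int.cast_one, sq_eq_one_iff] at hy
  obtain h | h := hy
  · exact hy' (h ▸ one_mem _)
  · exact hy' (h ▸ neg_mem (one_mem _))

end IntermediateField

namespace NumberField.ComplexEmbedding

variable {L : Type*} [Field L] [CharZero L]

theorem exists_isConj [IsGalois ℚ L] (ψ : L →+* ℂ) : ∃ σ : Gal(L/ℚ), IsConj ψ σ := by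
  obtain ⟨σ, hσ⟩ :=
    exists_comp_symm_eq_of_comp_eq (k := ℚ) ψ (conjugate ψ) (Subsingleton.elim _ _)
  exact ⟨σ.symm, hσ.symm⟩

/-- Extending `φ` to `L`, complex conjugation becomes an automorphism of `L` of order at most two,
which fixes `K` by assumption. -/
theorem isReal_of_sq_eq_one_mem_fixingSubgroup [IsGalois ℚ L] {K : IntermediateField ℚ L}
    (hK : ∀ σ : Gal(L/ℚ), σ ^ 2 = 1 → σ ∈ K.fixingSubgroup) (φ : K →+* ℂ) : IsReal φ := by
  let := φ.toAlgebra
  let ψ : L →ₐ[K] ℂ := IsAlgClosed.lift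
  obtain ⟨σ, hσ⟩ := exists_isConj (ψ : L →+* ℂ)
  have hσK := hK σ (by ext x; simpa using isConj_apply_apply hσ x)
  ext v
  have hconj := hσ.eq v
  rw [(mem_fixingSubgroup_iff _ σ).mp hσK v v.2] at hconj
  have hv : ψ v = φ v := ψ.commutes v
  rw [conjugate_coe_eq, ← hv]
  exact hconj.symm

theorem intCast_nonneg_of_sq_eq [Algebra.IsAlgebraic ℚ L] {K : IntermediateField ℚ L}
    (hK : ∀ φ : K →+* ℂ, IsReal φ) {x : L} (hxK : x ∈ K) {d : ℤ} (hx : x ^ 2 = d) : 0 ≤ d := by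
  let φ : K →+* ℂ := (IsAlgClosed.lift : L →ₐ[ℚ] ℂ).toRingHom.comp (algebraMap K L)
  have hx' : (⟨x, hxK⟩ : K) ^ 2 = d := Subtype.ext (by simpa using hx)
  have := congrArg (hK φ).embedding hx'
  rw [map_pow, map_intCast] at this
  exact_mod_cast this ▸ sq_nonneg _

end NumberField.ComplexEmbedding

section Discriminant

variable {R : Type*} [CommRing R] (p : ℕ) [Fact p.Prime]

theorem Algebra.prime_dvd_trace_of_dvd_pow [Module.Free ℤ R] [Module.Finite ℤ R] {z : R}
    {n : ℕ} (hz : (p : R) ∣ z ^ n) : (p : ℤ) ∣ Algebra.trace ℤ R z := by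
  classical
  obtain ⟨w, hw⟩ := hz
  let b := Module.Free.chooseBasis ℤ R
  let f := (Int.castRingHom (ZMod p)).mapMatrix (m := Module.Free.ChooseBasisIndex ℤ R)
  have hnil : IsNilpotent (f (Algebra.leftMulMatrix b z)) :=
    ⟨n, by rw [← map_pow, ← map_pow, hw, map_mul, map_mul, map_natCast, map_natCast,
      ← Matrix.diagonal_natCast, ZMod.natCast_self, Matrix.diagonal_zero, zero_mul]⟩
  rw [← ZMod.intCast_zmod_eq_zero_iff_dvd, Algebra.trace_eq_matrix_trace b,
    ← eq_intCast (Int.castRingHom (ZMod p)), AddMonoidHom.map_trace]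
  exact (Matrix.isNilpotent_trace_of_isNilpotent hnil).eq_zero

theorem Algebra.prime_dvd_of_dvd_pow_of_not_dvd_discr {ι : Type*} [Fintype ι] [DecidableEq ι]
    (b : Basis ι ℤ R) (hb : ¬ (p : ℤ) ∣ Algebra.discr ℤ b) {z : R} {n : ℕ}
    (hz : (p : R) ∣ z ^ n) : (p : R) ∣ z := by
  have := Module.Free.of_basis b
  have := Module.Finite.of_basis b
  let f := Int.castRingHom (ZMod p)
  have hcoord : f ∘ b.equivFun z = 0 := by
    refine Matrix.eq_zero_of_mulVec_eq_zero (M := (Algebra.traceMatrix ℤ b).map f) ?_ ?_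
    · show ¬ ((Algebra.traceMatrix ℤ b).map f).det = 0
      rwa [← RingHom.mapMatrix_apply, ← RingHom.map_det, ← Algebra.discr_def, eq_intCast,
        ZMod.intCast_zmod_eq_zero_iff_dvd]
    · ext j
      rw [← RingHom.map_mulVec, Algebra.traceMatrix_of_basis_mulVec, Pi.zero_apply,
        eq_intCast, ZMod.intCast_zmod_eq_zero_iff_dvd]
      exact Algebra.prime_dvd_trace_of_dvd_pow p (n := n) (by rw [mul_pow]; exact hz.mul_right _)
  rw [← b.sum_repr z]
  refine Finset.dvd_sum fun i _ ↦ ?_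
  obtain ⟨k, hk⟩ := (ZMod.intCast_zmod_eq_zero_iff_dvd _ p).mp (congrFun hcoord i)
  rw [Basis.equivFun_apply] at hk
  exact ⟨k • b i, by rw [hk, mul_smul, natCast_zsmul, nsmul_eq_mul]⟩

end Discriminant

theorem NumberField.RingOfIntegers.intCast_dvd_intCast_iff {K : Type*} [Field K] [CharZero K]
    {m n : ℤ} : (m : 𝓞 K) ∣ (n : 𝓞 K) ↔ m ∣ n := by
  refine ⟨fun ⟨w, hw⟩ ↦ ?_, Int.cast_dvd_cast m n⟩
  rcases eq_or_ne m 0 with rfl | hm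
  · simpa using hw
  have hm' : (m : ℚ) ≠ 0 := Int.cast_ne_zero.mpr hm
  have hwK : algebraMap (𝓞 K) K w = algebraMap ℚ K (n / m) := by
    have := congrArg (algebraMap (𝓞 K) K) hw
    rw [map_mul, map_intCast, map_intCast] at this
    rw [map_div₀, map_intCast, map_intCast, this, mul_div_cancel_left₀ _ (by exact_mod_cast hm)]
  obtain ⟨k, hk⟩ := IsIntegrallyClosed.isIntegral_iff.mp <|
    (isIntegral_algebraMap_iff (algebraMap ℚ K).injective).mp (hwK ▸ w.isIntegral_coe)
  rw [eq_intCast, eq_div_iff hm'] at hk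
  exact ⟨k, by exact_mod_cast hk.symm.trans (mul_comm _ _)⟩

namespace NumberField

variable {L : Type*} [Field L] [NumberField L]

theorem two_dvd_of_two_dvd_sq (hdisc : Odd (discr L)) {z : 𝓞 L} (hz : 2 ∣ z ^ 2) : 2 ∣ z := by
  have : Fact (Nat.Prime 2) := ⟨Nat.prime_two⟩
  exact_mod_cast Algebra.prime_dvd_of_dvd_pow_of_not_dvd_discr 2 (RingOfIntegers.basis L)
    (by exact_mod_cast Int.not_even_iff_odd.mpr hdisc ∘ even_iff_two_dvd.mpr)
    (z := z) (n := 2) (by exact_mod_cast hz)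

/-- Writing `z + c = 2 w`, one has `4 (w ^ 2 - c w) = d - c ^ 2`. -/
theorem four_dvd_sub_sq (hdisc : Odd (discr L)) {z : 𝓞 L} {d : ℤ} (hz : z ^ 2 = d) {c : ℤ}
    (hc : 2 ∣ d + c ^ 2) : 4 ∣ d - c ^ 2 := by
  obtain ⟨k, hk⟩ := hc
  have hk' : (d : 𝓞 L) + (c : 𝓞 L) ^ 2 = 2 * k := by exact_mod_cast hk
  obtain ⟨w, hw⟩ := two_dvd_of_two_dvd_sq hdisc (z := z + c)
    ⟨k + c * z, by rw [add_sq, hz]; linear_combination hk'⟩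
  refine RingOfIntegers.intCast_dvd_intCast_iff.mp ⟨w ^ 2 - (c : 𝓞 L) * w, ?_⟩
  push_cast
  linear_combination (-1 : 𝓞 L) * hz + (z + c + 2 * w - 2 * c) * hw

theorem emod_four_eq_one_of_sq_eq (hdisc : Odd (discr L)) {d : ℤ} (hd : Squarefree d) {x : L}
    (hx : x ^ 2 = d) : d % 4 = 1 := by
  have hint : x ∈ integralClosure ℤ L :=
    IsIntegral.of_pow two_pos (hx ▸ (map_intCast (algebraMap ℤ L) d ▸ isIntegral_algebraMap))
  obtain ⟨z, rfl⟩ : ∃ z : 𝓞 L, (z : L) = x := ⟨⟨x, hint⟩, rfl⟩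
  have hz : z ^ 2 = d :=
    FaithfulSMul.algebraMap_injective (𝓞 L) L (by rwa [map_pow, map_intCast])
  rcases Int.emod_two_eq_zero_or_one d with h | h
  · have := four_dvd_sub_sq hdisc hz (c := 0) (by omega)
    have h2 := Int.isUnit_iff.mp (hd 2 (by simpa using this))
    omega
  · have := four_dvd_sub_sq hdisc hz (c := 1) (by omega)
    omega

theorem exists_adjoin_sqrt_eq_of_le_of_isReal (hdisc : Odd (discr L))
    {K F : IntermediateField ℚ L} (hK : ∀ φ : K →+* ℂ, IsReal φ) (hFK : F ≤ K)
    (hF : finrank ℚ F = 2) :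
    ∃ d : ℤ, Squarefree d ∧ 1 < d ∧ d % 4 = 1 ∧ ∃ x : L, x ^ 2 = d ∧ ℚ⟮x⟯ = F := by
  obtain ⟨d, hd, hd1, x, hx, rfl⟩ := exists_squarefree_adjoin_eq_of_finrank_eq_two hF
  have hd0 := intCast_nonneg_of_sq_eq hK (hFK (mem_adjoin_simple_self ℚ x)) hx
  have := hd.ne_zero
  exact ⟨d, hd, by omega, emod_four_eq_one_of_sq_eq hdisc hd hx, x, hx, rfl⟩

end NumberField

/-- Let `L` be a number field, Galois over `ℚ` with Galois group
isomorphic to the quaternion group `Q₈` of order 8 and with odd discriminant. Let `H`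
be a subgroup of `Gal(L/ℚ)` of order 2 and `K` its fixed field. Then `K` is totally
real (every complex embedding of `K` takes values in `ℝ`), and there are squarefree
integers `d₁, d₂ > 1` with `d₁ ≠ d₂`, `d₁ ≡ 1 (mod 4)`, `d₂ ≡ 1 (mod 4)` such that
`K = ℚ(√d₁, √d₂)`, i.e. `K` is generated over `ℚ` by elements `x`, `y` with `x² = d₁`
and `y² = d₂`. -/
theorem quaternion_field_quartic_subfield (L : Type) [Field L] [NumberField L]
    [IsGalois ℚ L]
    (e : (L ≃ₐ[ℚ] L) ≃* QuaternionGroup 2)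
    (hdisc : Odd (NumberField.discr L))
    (H : Subgroup (L ≃ₐ[ℚ] L)) (hH : Nat.card H = 2)
    (K : IntermediateField ℚ L) (hK : K = IntermediateField.fixedField H) :
    (∀ φ : K →+* ℂ, ∀ v : K, (φ v).im = 0) ∧
    ∃ d1 d2 : ℤ, Squarefree d1 ∧ Squarefree d2 ∧ 1 < d1 ∧ 1 < d2 ∧ d1 ≠ d2 ∧
      d1 % 4 = 1 ∧ d2 % 4 = 1 ∧
      ∃ x y : L, x ^ 2 = (d1 : L) ∧ y ^ 2 = (d2 : L) ∧
        K = IntermediateField.adjoin ℚ {x, y} := by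
  subst hK
  have hreal (φ : fixedField H →+* ℂ) : IsReal φ :=
    isReal_of_sq_eq_one_mem_fixingSubgroup (fun σ hσ ↦ by
      rwa [fixingSubgroup_fixedField, QuaternionGroup.mem_iff_sq_eq_one e hH]) φ
  refine ⟨fun φ v ↦ Complex.conj_eq_iff_im.mp (RingHom.congr_fun (hreal φ) v), ?_⟩
  obtain ⟨H₁, H₂, hH₁, hH₂, rfl⟩ := QuaternionGroup.exists_card_four_inf_eq e hH
  have hdeg {H' : Subgroup Gal(L/ℚ)} (h : Nat.card H' = 4) : finrank ℚ (fixedField H') = 2 := by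
    have := IsGalois.finrank_fixedField_mul_card H'
    rw [h, ← IsGalois.card_aut_eq_finrank ℚ L, Nat.card_congr e.toEquiv,
      Nat.card_eq_fintype_card, QuaternionGroup.card] at this
    omega
  obtain ⟨d₁, hd₁, hd₁_gt, hd₁_mod, x, hx, hx₁⟩ :=
    exists_adjoin_sqrt_eq_of_le_of_isReal hdisc hreal (fixedField_le inf_le_left) (hdeg hH₁)
  obtain ⟨d₂, hd₂, hd₂_gt, hd₂_mod, y, hy, hy₂⟩ :=
    exists_adjoin_sqrt_eq_of_le_of_isReal hdisc hreal (fixedField_le inf_le_right) (hdeg hH₂)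
  refine ⟨d₁, d₂, hd₁, hd₂, hd₁_gt, hd₂_gt, ?_, hd₁_mod, hd₂_mod, x, y, hx, hy, ?_⟩
  · rintro rfl
    have : H₁ = H₂ := by
      rw [← fixingSubgroup_fixedField H₁, ← hx₁, adjoin_simple_eq_of_sq_eq_sq (hx.trans hy.symm),
        hy₂, fixingSubgroup_fixedField]
    subst this
    rw [inf_idem] at hH
    omega
  · rw [IsGalois.fixedField_inf, ← hx₁, ← hy₂, Set.insert_eq, adjoin_union]
end
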